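/- arXiv:2311.12938 — 4 statements merged into one kernel-verified Lean document; each statement's English description precedes it below -/
import Mathlib

section
/- In the permutational wreath product G = H ≀_X F, where F acts transitively on X with base point y₀, generated by {(δ_s^{y₀}, 1_F) : s ∈ S} ∪ {(1, t) : t ∈ T}, if an element g = (k, f) has k(x) ≠ 1 for some x ∈ X, then the word length of g in G is at least d_X(x, y₀), where d_X(x, y) = min{|f|_T : f ∈ F, f·x = y}. -/
/-- The action of `F` on `X → H` induced by an action of `F` on `X`:
`(f • k) x = k (f⁻¹ • x)`. -/
def wreathAct (F X H : Type*) [Group F] [Group H] [MulAction F X] :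
    F →* MulAut (X → H) where
  toFun f :=
    { toFun := fun k x => k (f⁻¹ • x)
      invFun := fun k x => k (f • x)
      left_inv := fun k => by funext x; simp
      right_inv := fun k => by funext x; simp
      map_mul' := fun k k' => rfl }
  map_one' := by ext k x; simp
  map_mul' f g := by ext k x; simp [mul_smul]

/-- The (unrestricted) permutational wreath product `H ≀_X F` as `(X → H) ⋊ F`. -/
abbrev PermWreathProduct (H : Type*) (X : Type*) (F : Type*)
    [Group H] [Group F] [MulAction F X] :=
  SemidirectProduct (X → H) F (wreathAct F X H)

/-!
Read a word from the left. A letter whose lamp part lives at `y₀` can only change the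
lamp at `y₀`, and a letter `(k, t)` shifts all lamps of the rest of the word by `t`: a lamp
lit at `x` by the product comes from a lamp lit at `t⁻¹ • x` by the rest. Following `x`
back until it reaches `y₀` costs one letter `t⁻¹ ∈ T` for each letter with `t ≠ 1`.
-/

namespace PermWreathProduct

variable {H X F : Type*} [Group H] [Group F] [MulAction F X]

theorem mul_left_apply (a b : PermWreathProduct H X F) (x : X) :
    (a * b).left x = a.left x * b.left (a.right⁻¹ • x) :=
  rfl

theorem exists_word_smul_eq_of_prod_left_ne_one {T : Set F} (hT : ∀ t ∈ T, t⁻¹ ∈ T) {y₀ : X}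
    {l : List (PermWreathProduct H X F)}
    (hl : ∀ w ∈ l, (∀ z ≠ y₀, w.left z = 1) ∧ (w.right = 1 ∨ w.right ∈ T))
    {x : X} (hx : l.prod.left x ≠ 1) :
    ∃ lf : List F, (∀ u ∈ lf, u ∈ T) ∧ lf.prod • x = y₀ ∧ lf.length ≤ l.length := by
  induction l generalizing x with
  | nil => exact absurd rfl hx
  | cons w l ih =>
    obtain ⟨hw_left, hw_right⟩ := hl w List.mem_cons_self
    by_cases hxy : x = y₀
    · exact ⟨[], by simp, by simp [hxy], by simp⟩
    have hx' : l.prod.left (w.right⁻¹ • x) ≠ 1 := by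
      simpa only [List.prod_cons, mul_left_apply, hw_left x hxy, one_mul] using hx
    obtain ⟨lf, hlfT, hlf, hlen⟩ := ih (fun v hv => hl v (List.mem_cons_of_mem w hv)) hx'
    rcases hw_right with hw_one | hwT
    · exact ⟨lf, hlfT, by simpa [hw_one] using hlf, hlen.trans (by simp)⟩
    · refine ⟨lf ++ [w.right⁻¹], ?_, by simpa [mul_smul] using hlf, by simpa using hlen⟩
      simpa [or_imp, forall_and] using ⟨hlfT, hT _ hwT⟩

end PermWreathProduct

theorem permWreath_length_ge_lamp_dist_general {H X F : Type*} [Group H] [Group F]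
    [MulAction F X] [DecidableEq X]
    (y₀ : X)
    (S : Set H) (T : Set F)
    (hTsym : ∀ t ∈ T, t⁻¹ ∈ T)
    (gens : Set (PermWreathProduct H X F))
    (hgens : gens = {g | ∃ s ∈ S, g = ⟨Pi.mulSingle y₀ s, 1⟩} ∪
                    {g | ∃ t ∈ T, g = ⟨1, t⟩})
    (k : X → H) (f : F) (x : X) (hx : k x ≠ 1)
    (l : List (PermWreathProduct H X F)) (hl : ∀ w ∈ l, w ∈ gens)
    (hprod : l.prod = ⟨k, f⟩) :
    ∃ lf : List F, (∀ u ∈ lf, u ∈ T) ∧ lf.prod • x = y₀ ∧ lf.length ≤ l.length := by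
  subst hgens
  refine PermWreathProduct.exists_word_smul_eq_of_prod_left_ne_one hTsym (fun w hw => ?_)
    (x := x) (by rwa [hprod])
  rcases hl w hw with ⟨s, -, rfl⟩ | ⟨t, ht, rfl⟩
  · exact ⟨fun z hz => Pi.mulSingle_eq_of_ne (M := fun _ => H) hz s, Or.inl rfl⟩
  · exact ⟨fun _ _ => rfl, Or.inr ht⟩

/-- In `G = H ≀_X F` with `F` acting transitively on `X`, base point `y₀`, and
generating set `{(δ_s^{y₀}, 1) : s ∈ S} ∪ {(1, t) : t ∈ T}`: if `g = (k, f)` has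
`k x ≠ 1` for some `x ∈ X`, then every word in the generators representing `g` has
length at least `d_X(x, y₀) = min {|f|_T : f • x = y₀}`; i.e. there is a word in `T`
of length at most that of the given word whose product moves `x` to `y₀`. -/
theorem permWreath_length_ge_lamp_dist {H X F : Type*} [Group H] [Group F]
    [MulAction F X] [DecidableEq X]
    (htrans : MulAction.IsPretransitive F X) (y₀ : X)
    (S : Set H) (T : Set F) (hSfin : S.Finite) (hTfin : T.Finite)
    (hSsym : ∀ s ∈ S, s⁻¹ ∈ S) (hTsym : ∀ t ∈ T, t⁻¹ ∈ T)
    (hSgen : Subgroup.closure S = ⊤) (hTgen : Subgroup.closure T = ⊤)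
    (gens : Set (PermWreathProduct H X F))
    (hgens : gens = {g | ∃ s ∈ S, g = ⟨Pi.mulSingle y₀ s, 1⟩} ∪
                    {g | ∃ t ∈ T, g = ⟨1, t⟩})
    (k : X → H) (f : F) (x : X) (hx : k x ≠ 1)
    (l : List (PermWreathProduct H X F)) (hl : ∀ w ∈ l, w ∈ gens)
    (hprod : l.prod = ⟨k, f⟩) :
    ∃ lf : List F, (∀ u ∈ lf, u ∈ T) ∧ lf.prod • x = y₀ ∧ lf.length ≤ l.length :=
  permWreath_length_ge_lamp_dist_general y₀ S T hTsym gens hgens k f x hx l hl hprod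
end

section
/- For any two vertices x₁x₂ and y₁y₂ of the Diestel-Leader graph DL(p,q), the graph distance satisfies dist(x₁x₂, y₁y₂) = d₁(x₁,y₁) + d₂(x₂,y₂) − |h₁(y₁) − h₁(x₁)|, where dᵢ is the tree metric on 𝕋ᵢ and hᵢ is the Busemann function on 𝕋ᵢ. -/
/-!
Write `a₁, b₁` for the numbers of levels `x₁` and `y₁` descend to their meet in `𝕋₁`, so that
`d₁(x₁,y₁) = a₁ + b₁` and `h₁(y₁) - h₁(x₁) = b₁ - a₁`, and `a₂, b₂` likewise in `𝕋₂`; then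
`a₁ + a₂ = b₁ + b₂`. Every walk in `DL(p,q)` projects to walks in both trees, so it visits the
meet in each of them. Since `h₁ = -h₂` on `DL(p,q)`, the first height, which moves by `±1` per
step, must dip by `a₁` below `h₁(x₁)` and rise by `a₂` above it, which costs at least
`2a₁ + 2a₂ - |h₁(y₁) - h₁(x₁)|` steps. This is attained by going down to the meet in `𝕋₁` while
climbing in `𝕋₂`, then down to the meet in `𝕋₂` while climbing in `𝕋₁`, then to `y₁y₂`, or by the
same route run from `y₁y₂`; climbing is possible since every vertex has children.
-/

/-- A homogeneous tree with a Busemann (height) function `h` towards a fixed end: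
the graph is connected and acyclic, every edge changes the height by exactly `1`,
every vertex has a unique neighbour of smaller height (its parent) and exactly `d`
neighbours of larger height (its children). -/
structure BusemannTree {V : Type*} (G : SimpleGraph V) (h : V → ℤ) (d : ℕ) : Prop where
  connected : G.Connected
  acyclic : G.IsAcyclic
  height_adj : ∀ x y, G.Adj x y → h y = h x + 1 ∨ h y = h x - 1
  parent_unique : ∀ x, ∃! y, G.Adj x y ∧ h y = h x - 1
  children_card : ∀ x, {y | G.Adj x y ∧ h y = h x + 1}.ncard = d

/-- The Diestel--Leader graph: the horocyclic product of two trees. -/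
def DLGraph {V₁ V₂ : Type*} (G₁ : SimpleGraph V₁) (G₂ : SimpleGraph V₂)
    (h₁ : V₁ → ℤ) (h₂ : V₂ → ℤ) :
    SimpleGraph {v : V₁ × V₂ // h₁ v.1 + h₂ v.2 = 0} where
  Adj a b := G₁.Adj a.1.1 b.1.1 ∧ G₂.Adj a.1.2 b.1.2
  symm := ⟨fun _ _ hab => ⟨hab.1.symm, hab.2.symm⟩⟩
  loopless := ⟨fun _ hab => G₁.irrefl hab.1⟩

open SimpleGraph Function

namespace BusemannTree

variable {V : Type*} {G : SimpleGraph V} {h : V → ℤ} {d : ℕ}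

theorem abs_height_sub_le_one (hT : BusemannTree G h d) {x y : V} (hxy : G.Adj x y) :
    |h y - h x| ≤ 1 := by
  rcases hT.height_adj x y hxy with hy | hy <;> rw [hy] <;> simp

variable (hT : BusemannTree G h d)

noncomputable def parent (x : V) : V :=
  (hT.parent_unique x).exists.choose

theorem adj_parent (x : V) : G.Adj x (hT.parent x) :=
  (hT.parent_unique x).exists.choose_spec.1

theorem height_parent (x : V) : h (hT.parent x) = h x - 1 :=
  (hT.parent_unique x).exists.choose_spec.2

theorem eq_parent_of_adj {x y : V} (hxy : G.Adj x y) (hy : h y = h x - 1) : y = hT.parent x :=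
  (hT.parent_unique x).unique ⟨hxy, hy⟩ ⟨hT.adj_parent x, hT.height_parent x⟩

theorem height_iterate_parent (k : ℕ) (x : V) : h (hT.parent^[k] x) = h x - k := by
  induction k with
  | zero => simp
  | succ k ih => rw [iterate_succ_apply', hT.height_parent, ih]; push_cast; ring

theorem height_sub_height_of_iterate_parent_eq {x y : V} {a b : ℕ}
    (hxy : hT.parent^[a] x = hT.parent^[b] y) : h y - h x = b - a := by
  have := congrArg h hxy
  rw [hT.height_iterate_parent, hT.height_iterate_parent] at this
  omega

theorem parent_surjective (hd : d ≠ 0) : Surjective hT.parent := by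
  intro x
  obtain ⟨y, hxy, hy⟩ : {y | G.Adj x y ∧ h y = h x + 1}.Nonempty :=
    Set.nonempty_of_ncard_ne_zero (hT.children_card x ▸ hd)
  exact ⟨y, (hT.eq_parent_of_adj hxy.symm (by omega)).symm⟩

/-- A path in the tree first descends to a common ancestor of its endpoints, then ascends. -/
theorem exists_iterate_parent_eq_of_isPath {x y : V} (P : G.Walk x y) (hP : P.IsPath) :
    ∃ a b : ℕ, hT.parent^[a] x = hT.parent^[b] y ∧ P.length = a + b ∧
      ∀ i ≤ a, hT.parent^[i] x ∈ P.support := by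
  induction P with
  | nil => exact ⟨0, 0, rfl, rfl, fun i hi => by simp [Nat.le_zero.mp hi]⟩
  | @cons u u' y hadj P ih =>
    rw [Walk.cons_isPath_iff] at hP
    obtain ⟨a, b, hab, hlen, hsupp⟩ := ih hP.1
    rcases hT.height_adj u u' hadj with hup | hdown
    · have hu : u = hT.parent u' := hT.eq_parent_of_adj hadj.symm (by omega)
      obtain _ | a := a
      · refine ⟨0, b + 1, ?_, by simp [hlen], fun i hi => by simp [Nat.le_zero.mp hi]⟩
        rw [iterate_succ_apply', ← hab, hu, iterate_zero_apply, iterate_zero_apply]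
      · -- otherwise the path would revisit `u = parent u'`
        exact (hP.2 (hu ▸ hsupp 1 (by omega))).elim
    · have hu' : u' = hT.parent u := hT.eq_parent_of_adj hadj hdown
      refine ⟨a + 1, b, by rw [iterate_succ_apply, ← hu', hab], by simp [hlen]; omega, ?_⟩
      rintro (_ | i) hi
      · simp
      · rw [iterate_succ_apply, ← hu', Walk.support_cons]
        exact List.mem_cons_of_mem _ (hsupp i (by omega))

theorem exists_meet (x y : V) :
    ∃ a b : ℕ, hT.parent^[a] x = hT.parent^[b] y ∧ G.dist x y = a + b ∧
      ∀ W : G.Walk x y, hT.parent^[a] x ∈ W.support := by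
  classical
  obtain ⟨P, hP, hPlen⟩ := hT.connected.exists_path_of_dist x y
  obtain ⟨a, b, hab, hlen, hsupp⟩ := hT.exists_iterate_parent_eq_of_isPath P hP
  refine ⟨a, b, hab, hPlen ▸ hlen, fun W => W.support_bypass_subset_support ?_⟩
  have hbypass : W.bypass = P := congrArg Subtype.val <|
    (hT.acyclic.subsingleton_path x y).elim ⟨W.bypass, W.bypass_isPath⟩ ⟨P, hP⟩
  exact hbypass ▸ hsupp a le_rfl

end BusemannTree

theorem abs_sub_le_of_abs_succ_sub_le {f : ℕ → ℤ} {n : ℕ}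
    (hf : ∀ t < n, |f (t + 1) - f t| ≤ 1) {i j : ℕ} (hij : i ≤ j) (hjn : j ≤ n) :
    |f j - f i| ≤ (j : ℤ) - i := by
  induction j, hij using Nat.le_induction with
  | base => simp
  | succ j hij ih =>
    calc |f (j + 1) - f i| ≤ |f (j + 1) - f j| + |f j - f i| := abs_sub_le _ _ _
      _ ≤ 1 + ((j : ℤ) - i) := add_le_add (hf j (by omega)) (ih (by omega))
      _ = ((j + 1 : ℕ) : ℤ) - i := by push_cast; ring

theorem two_mul_add_two_mul_sub_abs_le {f : ℕ → ℤ} {n : ℕ}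
    (hf : ∀ t < n, |f (t + 1) - f t| ≤ 1) {s t : ℕ} (hs : s ≤ n) (ht : t ≤ n) :
    2 * (f 0 - f s) + 2 * (f t - f 0) - |f n - f 0| ≤ n := by
  have hlip : ∀ i j, i ≤ j → j ≤ n → |f j - f i| ≤ (j : ℤ) - i :=
    fun i j hij hjn => abs_sub_le_of_abs_succ_sub_le hf hij hjn
  rcases le_total s t with hst | hts
  · have hend := le_abs_self (f n - f 0)
    have h₁ := abs_le.mp (hlip 0 s (Nat.zero_le s) hs)
    have h₂ := abs_le.mp (hlip s t hst ht)
    have h₃ := abs_le.mp (hlip t n ht le_rfl)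
    push_cast at h₁
    linarith
  · have hend := neg_abs_le (f n - f 0)
    have h₁ := abs_le.mp (hlip 0 t (Nat.zero_le t) ht)
    have h₂ := abs_le.mp (hlip t s hts hs)
    have h₃ := abs_le.mp (hlip s n hs le_rfl)
    push_cast at h₁
    linarith

namespace DLGraph

variable {V₁ V₂ : Type*} {G₁ : SimpleGraph V₁} {G₂ : SimpleGraph V₂} {h₁ : V₁ → ℤ} {h₂ : V₂ → ℤ}

def fst : DLGraph G₁ G₂ h₁ h₂ →g G₁ := ⟨fun v => v.1.1, fun hadj => hadj.1⟩

def snd : DLGraph G₁ G₂ h₁ h₂ →g G₂ := ⟨fun v => v.1.2, fun hadj => hadj.2⟩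

theorem le_length_of_mem_support (hh₁ : ∀ x y, G₁.Adj x y → |h₁ y - h₁ x| ≤ 1)
    {a b : {v : V₁ × V₂ // h₁ v.1 + h₂ v.2 = 0}} (W : (DLGraph G₁ G₂ h₁ h₂).Walk a b)
    {m₁ : V₁} {m₂ : V₂} (hm₁ : m₁ ∈ (W.map fst).support) (hm₂ : m₂ ∈ (W.map snd).support) :
    2 * (h₁ a.1.1 - h₁ m₁) + 2 * (h₂ a.1.2 - h₂ m₂) - |h₁ b.1.1 - h₁ a.1.1| ≤ W.length := by
  obtain ⟨s, hs, hsn⟩ := Walk.mem_support_iff_exists_getVert.mp hm₁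
  obtain ⟨t, ht, htn⟩ := Walk.mem_support_iff_exists_getVert.mp hm₂
  rw [Walk.getVert_map] at hs ht
  rw [Walk.length_map] at hsn htn
  let f : ℕ → ℤ := fun i => h₁ (W.getVert i).1.1
  have hf : ∀ i < W.length, |f (i + 1) - f i| ≤ 1 :=
    fun i hi => hh₁ _ _ (W.adj_getVert_succ hi).1
  have hf₀ : f 0 = h₁ a.1.1 := by simp [f]
  have hfn : f W.length = h₁ b.1.1 := by simp [f]
  have hfs : f s = h₁ m₁ := by rw [← hs]; rfl
  have hft : f t = - h₂ m₂ := by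
    rw [← ht]
    exact eq_neg_of_add_eq_zero_left (W.getVert t).2
  have := two_mul_add_two_mul_sub_abs_le hf hsn htn
  have ha := a.2
  rw [hf₀, hfn, hfs, hft] at this
  linarith

variable {p q : ℕ} (hT₁ : BusemannTree G₁ h₁ p) (hT₂ : BusemannTree G₂ h₂ q)

theorem exists_walk_length_eq_of_iterate_parent (k : ℕ)
    {u w : {v : V₁ × V₂ // h₁ v.1 + h₂ v.2 = 0}}
    (hw : w.1.1 = hT₁.parent^[k] u.1.1) (hu : u.1.2 = hT₂.parent^[k] w.1.2) :
    ∃ W : (DLGraph G₁ G₂ h₁ h₂).Walk u w, W.length = k := by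
  induction k generalizing u with
  | zero =>
    obtain rfl : u = w := Subtype.ext (Prod.ext hw.symm hu)
    exact ⟨Walk.nil, rfl⟩
  | succ k ih =>
    rw [iterate_succ_apply'] at hu
    have hc : h₁ (hT₁.parent u.1.1) + h₂ (hT₂.parent^[k] w.1.2) = 0 := by
      have := congrArg h₂ hu
      rw [hT₂.height_parent] at this
      have := u.2
      rw [hT₁.height_parent]
      omega
    let c : {v : V₁ × V₂ // h₁ v.1 + h₂ v.2 = 0} := ⟨(hT₁.parent u.1.1, hT₂.parent^[k] w.1.2), hc⟩
    have huc : (DLGraph G₁ G₂ h₁ h₂).Adj u c :=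
      ⟨hT₁.adj_parent u.1.1, hu ▸ (hT₂.adj_parent _).symm⟩
    obtain ⟨W, hW⟩ := ih (u := c) (by rw [hw, iterate_succ_apply]) rfl
    exact ⟨Walk.cons huc W, by simp [hW]⟩

theorem exists_walk_length_eq_of_meet (hp : p ≠ 0) (hq : q ≠ 0)
    (a b : {v : V₁ × V₂ // h₁ v.1 + h₂ v.2 = 0}) {a₁ b₁ a₂ b₂ : ℕ}
    (hm₁ : hT₁.parent^[a₁] a.1.1 = hT₁.parent^[b₁] b.1.1)
    (hm₂ : hT₂.parent^[a₂] a.1.2 = hT₂.parent^[b₂] b.1.2) :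
    ∃ W : (DLGraph G₁ G₂ h₁ h₂).Walk a b, W.length = a₁ + (a₁ + a₂) + b₂ := by
  have hΔ₁ := hT₁.height_sub_height_of_iterate_parent_eq hm₁
  have hΔ₂ := hT₂.height_sub_height_of_iterate_parent_eq hm₂
  have hsum : a₁ + a₂ = b₁ + b₂ := by have := a.2; have := b.2; omega
  obtain ⟨x₂, hx₂⟩ := (hT₂.parent_surjective hq).iterate a₁ a.1.2
  obtain ⟨y₁, hy₁⟩ := (hT₁.parent_surjective hp).iterate b₂ b.1.1
  have hx : h₁ (hT₁.parent^[a₁] a.1.1) + h₂ x₂ = 0 := by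
    have hx₂h := hT₂.height_iterate_parent a₁ x₂
    rw [hx₂] at hx₂h
    rw [hT₁.height_iterate_parent]
    have := a.2
    omega
  have hy : h₁ y₁ + h₂ (hT₂.parent^[a₂] a.1.2) = 0 := by
    have hy₁h := hT₁.height_iterate_parent b₂ y₁
    rw [hy₁] at hy₁h
    rw [hT₂.height_iterate_parent]
    have := a.2
    omega
  let x : {v : V₁ × V₂ // h₁ v.1 + h₂ v.2 = 0} := ⟨(hT₁.parent^[a₁] a.1.1, x₂), hx⟩
  let y : {v : V₁ × V₂ // h₁ v.1 + h₂ v.2 = 0} := ⟨(y₁, hT₂.parent^[a₂] a.1.2), hy⟩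
  obtain ⟨W₁, hW₁⟩ := exists_walk_length_eq_of_iterate_parent hT₁ hT₂ a₁ (u := a) (w := x) rfl
    hx₂.symm
  obtain ⟨W₂, hW₂⟩ := exists_walk_length_eq_of_iterate_parent hT₁ hT₂ (a₁ + a₂) (u := y) (w := x)
    (show hT₁.parent^[a₁] a.1.1 = hT₁.parent^[a₁ + a₂] y₁ by rw [hm₁, hsum, iterate_add_apply, hy₁])
    (show hT₂.parent^[a₂] a.1.2 = hT₂.parent^[a₁ + a₂] x₂ by rw [add_comm, iterate_add_apply, hx₂])
  obtain ⟨W₃, hW₃⟩ := exists_walk_length_eq_of_iterate_parent hT₁ hT₂ b₂ (u := y) (w := b)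
    hy₁.symm hm₂
  exact ⟨W₁.append (W₂.reverse.append W₃), by
    simp only [Walk.length_append, Walk.length_reverse, hW₁, hW₂, hW₃]; omega⟩

end DLGraph

/-- Distance formula in `DL(p,q)`:
`dist(x₁x₂, y₁y₂) = d₁(x₁,y₁) + d₂(x₂,y₂) − |h₁(y₁) − h₁(x₁)|`. -/
theorem DL_dist_formula {V₁ V₂ : Type*} (G₁ : SimpleGraph V₁) (G₂ : SimpleGraph V₂)
    (h₁ : V₁ → ℤ) (h₂ : V₂ → ℤ) (p q : ℕ) (hp : 2 ≤ p) (hq : 2 ≤ q)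
    (hT₁ : BusemannTree G₁ h₁ p) (hT₂ : BusemannTree G₂ h₂ q)
    (a b : {v : V₁ × V₂ // h₁ v.1 + h₂ v.2 = 0}) :
    ((DLGraph G₁ G₂ h₁ h₂).dist a b : ℤ) =
      (G₁.dist a.1.1 b.1.1 : ℤ) + (G₂.dist a.1.2 b.1.2 : ℤ)
        - |h₁ b.1.1 - h₁ a.1.1| := by
  obtain ⟨a₁, b₁, hm₁, hd₁, hvis₁⟩ := hT₁.exists_meet a.1.1 b.1.1
  obtain ⟨a₂, b₂, hm₂, hd₂, hvis₂⟩ := hT₂.exists_meet a.1.2 b.1.2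
  have hΔ₁ := hT₁.height_sub_height_of_iterate_parent_eq hm₁
  have hΔ₂ := hT₂.height_sub_height_of_iterate_parent_eq hm₂
  have hsum : (a₁ : ℤ) + a₂ = b₁ + b₂ := by have := a.2; have := b.2; omega
  obtain ⟨W, hW⟩ := DLGraph.exists_walk_length_eq_of_meet hT₁ hT₂ (by omega) (by omega) a b hm₁ hm₂
  obtain ⟨W', hW'⟩ :=
    DLGraph.exists_walk_length_eq_of_meet hT₁ hT₂ (by omega) (by omega) b a hm₁.symm hm₂.symm
  have hupper := dist_le W
  have hupper' := dist_comm (G := DLGraph G₁ G₂ h₁ h₂) ▸ dist_le W'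
  obtain ⟨Wmin, hWmin⟩ := W.reachable.exists_walk_length_eq_dist
  have hlower := DLGraph.le_length_of_mem_support (fun _ _ => hT₁.abs_height_sub_le_one) Wmin
    (hvis₁ (Wmin.map DLGraph.fst)) (hvis₂ (Wmin.map DLGraph.snd))
  rw [hT₁.height_iterate_parent, hT₂.height_iterate_parent, hWmin, hΔ₁] at hlower
  rw [hd₁, hd₂, hΔ₁]
  rcases abs_cases ((b₁ : ℤ) - a₁) with ⟨habs, _⟩ | ⟨habs, _⟩ <;> rw [habs] at hlower ⊢ <;> omega
end

section
/- In BS(2,4) = ⟨a, t | t a² t^{-1} = a⁴⟩, if an element h has word length at most m with respect to the generating set {a^{±1}, t^{±1}}, then the absolute value of its a-level is at most 2^{m−1}. -/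
/-!
The affine action `a : x ↦ x + 1`, `t : x ↦ 2x` of the free group on `ℚ` kills the relator of
`BS(p, 2p)`, so it descends to the group, and the `a`-level of an element is the image of `0` under it.
Each generator moves a point of absolute value at most `B ≥ 1` to one of absolute value at most
`2B`. The innermost letter of a word sends `0` into `[-1, 1]`, and each of the remaining `m - 1`
letters at most doubles the bound.
-/

/-- The Baumslag--Solitar relation `t a^p t⁻¹ (a^q)⁻¹` in the free group on two
generators (`0 ↦ a`, `1 ↦ t`). -/
def bsRel (p q : ℕ) : Set (FreeGroup (Fin 2)) :=
  {FreeGroup.of 1 * (FreeGroup.of 0) ^ p * (FreeGroup.of 1)⁻¹ * ((FreeGroup.of 0) ^ q)⁻¹}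

/-- The Baumslag--Solitar group `BS(p,q) = ⟨a, t ∣ t a^p t⁻¹ = a^q⟩`. -/
abbrev BS (p q : ℕ) := PresentedGroup (bsRel p q)

/-- The affine action of the free group on two generators on `ℚ`:
`a` acts by `x ↦ x + 1` and `t` acts by `x ↦ 2x`. -/
noncomputable def affAction : FreeGroup (Fin 2) →* Equiv.Perm ℚ :=
  FreeGroup.lift (fun i =>
    if i = 0 then Equiv.addRight (1 : ℚ) else Equiv.mulLeft₀ (2 : ℚ) (by norm_num))

/-- The `a`-level of a word `a^{i₁}t^{j₁}⋯a^{i_h}t^{j_h}`: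
`i₁ + i₂·2^{j₁} + ⋯ + i_h·2^{j₁+⋯+j_{h−1}}`. -/
noncomputable def freeALevel (w : FreeGroup (Fin 2)) : ℚ := affAction w 0

theorem affAction_bsRel (p : ℕ) : ∀ r ∈ bsRel p (2 * p), affAction r = 1 := by
  rintro r rfl
  ext x
  simp only [affAction, map_mul, map_inv, map_pow, FreeGroup.lift_apply_of, one_ne_zero,
    ↓reduceIte, Equiv.nsmul_addRight, nsmul_eq_mul, mul_one, Equiv.Perm.inv_def, Nat.cast_mul,
    Nat.cast_ofNat, Equiv.addRight_symm, Equiv.Perm.coe_mul, Equiv.mulLeft₀_apply,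
    Equiv.coe_addRight, Equiv.mulLeft₀_symm_apply, Function.comp_apply, Equiv.Perm.coe_one, id_eq]
  field_simp
  ring

noncomputable def bsAffAction (p : ℕ) : BS p (2 * p) →* Equiv.Perm ℚ :=
  PresentedGroup.toGroup (affAction_bsRel p)

theorem bsAffAction_mk (p : ℕ) (w : FreeGroup (Fin 2)) :
    bsAffAction p (PresentedGroup.mk _ w) = affAction w := rfl

section Generators

variable {p : ℕ} (v : ℚ)

@[simp]
theorem bsAffAction_of_zero_apply : bsAffAction p (PresentedGroup.of 0) v = v + 1 := rfl

@[simp]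
theorem bsAffAction_of_one_apply : bsAffAction p (PresentedGroup.of 1) v = 2 * v := rfl

theorem bsAffAction_inv_of_zero_apply : bsAffAction p (PresentedGroup.of 0)⁻¹ v = v - 1 := by
  rw [map_inv, Equiv.Perm.inv_eq_iff_eq, bsAffAction_of_zero_apply, sub_add_cancel]

theorem bsAffAction_inv_of_one_apply : bsAffAction p (PresentedGroup.of 1)⁻¹ v = v / 2 := by
  rw [map_inv, Equiv.Perm.inv_eq_iff_eq, bsAffAction_of_one_apply]
  ring

def bsGenerators (p q : ℕ) : Set (BS p q) :=
  {PresentedGroup.of 0, (PresentedGroup.of 0)⁻¹, PresentedGroup.of 1, (PresentedGroup.of 1)⁻¹}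

variable {g : BS p (2 * p)} (hg : g ∈ bsGenerators p (2 * p))
include hg

theorem abs_bsAffAction_generator_zero_le_one : |bsAffAction p g 0| ≤ 1 := by
  rcases hg with rfl | rfl | rfl | rfl <;>
    simp only [bsAffAction_of_zero_apply, bsAffAction_inv_of_zero_apply,
      bsAffAction_of_one_apply, bsAffAction_inv_of_one_apply] <;> norm_num

theorem abs_bsAffAction_generator_le {B : ℚ} (hB : 1 ≤ B) (hv : |v| ≤ B) :
    |bsAffAction p g v| ≤ 2 * B := by
  obtain ⟨hvl, hvu⟩ := abs_le.mp hv
  rcases hg with rfl | rfl | rfl | rfl <;>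
    simp only [bsAffAction_of_zero_apply, bsAffAction_inv_of_zero_apply,
      bsAffAction_of_one_apply, bsAffAction_inv_of_one_apply] <;>
    exact abs_le.mpr ⟨by linarith, by linarith⟩

end Generators

theorem abs_bsAffAction_prod_le {p : ℕ} (l : List (BS p (2 * p)))
    (hl : ∀ x ∈ l, x ∈ bsGenerators p (2 * p)) {v B : ℚ} (hB : 1 ≤ B) (hv : |v| ≤ B) :
    |bsAffAction p l.prod v| ≤ 2 ^ l.length * B := by
  induction l with
  | nil => simpa using hv
  | cons g t ih =>
    have hgen : g ∈ bsGenerators p (2 * p) := hl g List.mem_cons_self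
    have htail := ih fun x hx => hl x (List.mem_cons_of_mem g hx)
    have hBt : 1 ≤ 2 ^ t.length * B := one_le_mul_of_one_le_of_one_le (one_le_pow₀ one_le_two) hB
    calc |bsAffAction p (g :: t).prod v|
        = |bsAffAction p g (bsAffAction p t.prod v)| := by simp
      _ ≤ 2 * (2 ^ t.length * B) := abs_bsAffAction_generator_le _ hgen hBt htail
      _ = 2 ^ (g :: t).length * B := by rw [List.length_cons, pow_succ]; ring

theorem abs_bsAffAction_prod_zero_le {p : ℕ} (l : List (BS p (2 * p)))
    (hl : ∀ x ∈ l, x ∈ bsGenerators p (2 * p)) :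
    |bsAffAction p l.prod 0| ≤ 2 ^ (l.length - 1) := by
  rcases l.eq_nil_or_concat with rfl | ⟨l', g, rfl⟩
  · simp
  have hg : g ∈ bsGenerators p (2 * p) := hl g (by simp)
  have hl' : ∀ x ∈ l', x ∈ bsGenerators p (2 * p) := fun x hx => hl x (by simp [hx])
  simpa using abs_bsAffAction_prod_le l' hl' le_rfl (abs_bsAffAction_generator_zero_le_one hg)

/-- In `BS(2,4)`, if an element has word length at most `m` with respect to
`{a^{±1}, t^{±1}}`, then the absolute value of its `a`-level is at most `2^{m−1}`. -/
theorem BS24_aLevel_bound (m : ℕ) (w : FreeGroup (Fin 2)) (l : List (BS 2 4))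
    (hl : ∀ x ∈ l, x ∈ ({PresentedGroup.of 0, (PresentedGroup.of 0)⁻¹,
      PresentedGroup.of 1, (PresentedGroup.of 1)⁻¹} : Set (BS 2 4)))
    (hprod : l.prod = PresentedGroup.mk (bsRel 2 4) w)
    (hlen : l.length ≤ m) :
    |freeALevel w| ≤ 2 ^ (m - 1) := by
  have hlevel : freeALevel w = bsAffAction 2 l.prod 0 := by
    rw [hprod, bsAffAction_mk]
    rfl
  calc |freeALevel w| = |bsAffAction 2 l.prod 0| := by rw [hlevel]
    _ ≤ 2 ^ (l.length - 1) := abs_bsAffAction_prod_zero_le l hl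
    _ ≤ 2 ^ (m - 1) := pow_le_pow_right₀ one_le_two (by omega)
end

section
/- The wreath product of graphs B ≀ A, where A and B are connected vertex-transitive graphs, is itself vertex-transitive; moreover if A and B are locally finite then so is B ≀ A. -/
/-- The wreath product `B ≀ A` of graphs (Erschler): vertices are pairs `(f, a)` with
`f : V(A) → V(B)` finitely supported relative to `b₀` and `a ∈ V(A)`; edges of
type (1) change the value of `f` at `a` along an edge of `B`, edges of type (2)
move `a` along an edge of `A`. -/
def graphWreath {α β : Type*} (A : SimpleGraph α) (B : SimpleGraph β) (b₀ : β) :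
    SimpleGraph ({f : α → β // {x | f x ≠ b₀}.Finite} × α) where
  Adj u v :=
    (u.2 = v.2 ∧ (∀ x, x ≠ u.2 → u.1.1 x = v.1.1 x) ∧ B.Adj (u.1.1 u.2) (v.1.1 v.2)) ∨
    (u.1 = v.1 ∧ A.Adj u.2 v.2)
  symm := by
    constructor
    rintro ⟨f₁, a₁⟩ ⟨f₂, a₂⟩ (⟨h1, h2, h3⟩ | ⟨h1, h2⟩) <;> dsimp at *
    · subst h1
      exact Or.inl ⟨rfl, fun x hx => (h2 x hx).symm, h3.symm⟩
    · subst h1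
      exact Or.inr ⟨rfl, h2.symm⟩
  loopless := by
    constructor
    rintro ⟨f, a⟩ (⟨_, _, h3⟩ | ⟨_, h2⟩)
    · exact B.loopless.irrefl _ h3
    · exact A.loopless.irrefl _ h2

/-- A graph is vertex-transitive if its automorphism group acts transitively on
vertices. -/
def VertexTransitive {V : Type*} (G : SimpleGraph V) : Prop :=
  ∀ u v : V, ∃ e : G ≃g G, e u = v

/-!
Automorphisms of `A` act on `B ≀ A` by relabelling positions, `(f, a) ↦ (f ∘ σ⁻¹, σ a)`, and a
family of automorphisms `(τₓ)` of `B`, almost all fixing `b₀`, acts by `(f, a) ↦ (x ↦ τₓ (f x), a)`.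
To move `(f, a)` to `(g, c)`, first relabel by some `σ` with `σ a = c`, then at each position `x`
apply an automorphism of `B` taking the current value to `g x`, the identity where they already
agree. Local finiteness holds because a neighbour of `(f, a)` is either `(update f a b, a)` with
`b ~ f a` or `(f, a')` with `a' ~ a`.
-/

open SimpleGraph

def SimpleGraph.Iso.ofMapAdj {V W : Type*} {G : SimpleGraph V} {H : SimpleGraph W} (e : V ≃ W)
    (h : ∀ u v, G.Adj u v → H.Adj (e u) (e v))
    (h' : ∀ u v, H.Adj u v → G.Adj (e.symm u) (e.symm v)) : G ≃g H :=
  { e with map_rel_iff' := fun {u v} => ⟨fun huv => by simpa using h' _ _ huv, h u v⟩ }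

namespace graphWreath

abbrev FinitelySupported (α : Type*) {β : Type*} (b₀ : β) :=
  {f : α → β // {x | f x ≠ b₀}.Finite}

variable {α α' β : Type*} {b₀ : β}

namespace FinitelySupported

def domCongr (σ : α ≃ α') : FinitelySupported α b₀ ≃ FinitelySupported α' b₀ where
  toFun f := ⟨f.1 ∘ σ.symm, f.2.preimage σ.symm.injective.injOn⟩
  invFun f := ⟨f.1 ∘ σ, f.2.preimage σ.injective.injOn⟩
  left_inv f := Subtype.ext (funext fun x => congrArg f.1 (σ.symm_apply_apply x))
  right_inv f := Subtype.ext (funext fun x => congrArg f.1 (σ.apply_symm_apply x))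

def pointwise (τ : α → β → β) (hτ : {x | τ x b₀ ≠ b₀}.Finite) (f : FinitelySupported α b₀) :
    FinitelySupported α b₀ :=
  ⟨fun x => τ x (f.1 x), (f.2.union hτ).subset fun x hx => by
    by_contra hfx
    simp_all⟩

lemma setOf_symm_apply_ne (τ : α → β ≃ β) :
    {x | (τ x).symm b₀ ≠ b₀} = {x | τ x b₀ ≠ b₀} :=
  Set.ext fun x => not_congr ((τ x).symm_apply_eq.trans eq_comm)

def pointwiseEquiv (τ : α → β ≃ β) (hτ : {x | τ x b₀ ≠ b₀}.Finite) :
    FinitelySupported α b₀ ≃ FinitelySupported α b₀ where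
  toFun := pointwise (fun x => τ x) hτ
  invFun := pointwise (fun x => (τ x).symm) (setOf_symm_apply_ne τ ▸ hτ)
  left_inv _ := Subtype.ext (funext fun x => (τ x).symm_apply_apply _)
  right_inv _ := Subtype.ext (funext fun x => (τ x).apply_symm_apply _)

def update [DecidableEq α] (f : FinitelySupported α b₀) (a : α) (b : β) :
    FinitelySupported α b₀ :=
  ⟨Function.update f.1 a b, (f.2.insert a).subset fun x hx => by
    by_cases hxa : x = a
    · exact Or.inl hxa
    · exact Or.inr (by simpa [Function.update_of_ne hxa] using hx)⟩

end FinitelySupported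

open FinitelySupported

variable {A : SimpleGraph α} {A' : SimpleGraph α'} {B : SimpleGraph β}

lemma adj_iff {f g : FinitelySupported α b₀} {a c : α} :
    (graphWreath A B b₀).Adj (f, a) (g, c) ↔
      (a = c ∧ (∀ x, x ≠ a → f.1 x = g.1 x) ∧ B.Adj (f.1 a) (g.1 c)) ∨ (f = g ∧ A.Adj a c) :=
  Iff.rfl

lemma adj_domCongr (σ : A ≃g A') {f g : FinitelySupported α b₀} {a c : α}
    (h : (graphWreath A B b₀).Adj (f, a) (g, c)) :
    (graphWreath A' B b₀).Adj (domCongr σ.toEquiv f, σ a) (domCongr σ.toEquiv g, σ c) := by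
  rcases adj_iff.mp h with ⟨rfl, hfg, hB⟩ | ⟨rfl, hA⟩
  · refine Or.inl ⟨rfl, fun y hy => hfg _ fun h => hy (σ.toEquiv.symm_apply_eq.mp h), ?_⟩
    show B.Adj (f.1 (σ.toEquiv.symm (σ.toEquiv a))) (g.1 (σ.toEquiv.symm (σ.toEquiv a)))
    rwa [Equiv.symm_apply_apply]
  · exact Or.inr ⟨rfl, σ.map_adj_iff.mpr hA⟩

def baseIso (σ : A ≃g A') : graphWreath A B b₀ ≃g graphWreath A' B b₀ :=
  Iso.ofMapAdj ((domCongr σ.toEquiv).prodCongr σ.toEquiv)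
    (fun _ _ h => adj_domCongr σ h) (fun _ _ h => adj_domCongr σ.symm h)

lemma adj_pointwise (τ : α → B ≃g B) (hτ : {x | τ x b₀ ≠ b₀}.Finite)
    {f g : FinitelySupported α b₀} {a c : α} (h : (graphWreath A B b₀).Adj (f, a) (g, c)) :
    (graphWreath A B b₀).Adj (pointwise (fun x => τ x) hτ f, a)
      (pointwise (fun x => τ x) hτ g, c) := by
  rcases adj_iff.mp h with ⟨rfl, hfg, hB⟩ | ⟨rfl, hA⟩
  · exact Or.inl ⟨rfl, fun x hx => congrArg (τ x) (hfg x hx), (τ a).map_adj_iff.mpr hB⟩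
  · exact Or.inr ⟨rfl, hA⟩

def pointwiseAut (τ : α → B ≃g B) (hτ : {x | τ x b₀ ≠ b₀}.Finite) :
    graphWreath A B b₀ ≃g graphWreath A B b₀ :=
  Iso.ofMapAdj ((pointwiseEquiv (fun x => (τ x).toEquiv) hτ).prodCongr (Equiv.refl α))
    (fun _ _ h => adj_pointwise τ hτ h)
    (fun _ _ h => adj_pointwise (fun x => (τ x).symm)
      (setOf_symm_apply_ne (fun x => (τ x).toEquiv) ▸ hτ) h)

lemma exists_pointwise_eq (hB : VertexTransitive B) (f g : FinitelySupported α b₀) :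
    ∃ (τ : α → B ≃g B) (hτ : {x | τ x b₀ ≠ b₀}.Finite), pointwise (fun x => τ x) hτ f = g := by
  classical
  choose φ hφ using hB
  let τ x : B ≃g B := if f.1 x = g.1 x then Iso.refl else φ (f.1 x) (g.1 x)
  have hτ : {x | τ x b₀ ≠ b₀}.Finite := (f.2.union g.2).subset fun x hx => by
    by_contra hfg
    simp_all [τ]
  refine ⟨τ, hτ, Subtype.ext (funext fun x => ?_)⟩
  by_cases hx : f.1 x = g.1 x <;> simp [pointwise, τ, hx, hφ]

theorem vertexTransitive (hA : VertexTransitive A) (hB : VertexTransitive B) :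
    VertexTransitive (graphWreath A B b₀) := by
  rintro ⟨f, a⟩ ⟨g, c⟩
  obtain ⟨σ, rfl⟩ := hA a c
  obtain ⟨τ, hτ, hfg⟩ := exists_pointwise_eq hB (domCongr σ.toEquiv f) g
  exact ⟨(baseIso σ).trans (pointwiseAut τ hτ), Prod.ext hfg rfl⟩

lemma neighborSet_subset [DecidableEq α] (f : FinitelySupported α b₀) (a : α) :
    (graphWreath A B b₀).neighborSet (f, a) ⊆
      (fun b => (f.update a b, a)) '' B.neighborSet (f.1 a) ∪ (f, ·) '' A.neighborSet a := by
  rintro ⟨g, c⟩ h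
  rcases adj_iff.mp h with ⟨rfl, hfg, hB⟩ | ⟨rfl, hA⟩
  · refine Or.inl ⟨g.1 a, hB, Prod.ext (Subtype.ext ?_) rfl⟩
    exact (Function.eq_update_iff.mpr ⟨rfl, fun x hx => (hfg x hx).symm⟩).symm
  · exact Or.inr ⟨c, hA, rfl⟩

theorem neighborSet_finite (hA : ∀ a, (A.neighborSet a).Finite)
    (hB : ∀ b, (B.neighborSet b).Finite) (v : FinitelySupported α b₀ × α) :
    ((graphWreath A B b₀).neighborSet v).Finite := by
  classical
  exact (((hB _).image _).union ((hA _).image _)).subset (neighborSet_subset v.1 v.2)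

end graphWreath

theorem graphWreath_vertexTransitive_and_locallyFinite_general {α β : Type*}
    (A : SimpleGraph α) (B : SimpleGraph β) (b₀ : β)
    (hA : VertexTransitive A) (hB : VertexTransitive B) :
    VertexTransitive (graphWreath A B b₀) ∧
    ((∀ a, (A.neighborSet a).Finite) → (∀ b, (B.neighborSet b).Finite) →
      ∀ v, ((graphWreath A B b₀).neighborSet v).Finite) :=
  ⟨graphWreath.vertexTransitive hA hB, graphWreath.neighborSet_finite⟩

/-- If `A` and `B` are connected vertex-transitive graphs, then `B ≀ A` is
vertex-transitive; moreover if `A` and `B` are locally finite then so is `B ≀ A`. -/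
theorem graphWreath_vertexTransitive_and_locallyFinite {α β : Type*}
    (A : SimpleGraph α) (B : SimpleGraph β) (b₀ : β)
    (hAconn : A.Connected) (hBconn : B.Connected)
    (hA : VertexTransitive A) (hB : VertexTransitive B) :
    VertexTransitive (graphWreath A B b₀) ∧
    ((∀ a, (A.neighborSet a).Finite) → (∀ b, (B.neighborSet b).Finite) →
      ∀ v, ((graphWreath A B b₀).neighborSet v).Finite) :=
  graphWreath_vertexTransitive_and_locallyFinite_general A B b₀ hA hB
end
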